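/- Let T be a subset of Fin (n+1) with σ·T = T, and suppose that the cardinality of T ∩ E equals 2. Then {T' ∈ O(T) | σ·T' = T'} = {T, τ·T} with τ·T ≠ T, and moreover τ′·T = T and τ′·(τ·T) = τ·T. In particular the set of σ-invariant elements of O(T) has exactly two elements, each fixed by τ′, so its quotient by the action of τ′ also has exactly two elements. -/

import Mathlib

open Fin.NatCast

/-- Vertices of the affine Dynkin diagram of type `D_n` are identified with
`Fin (n+1) = {0, 1, …, n}`. `sigmaD n` is the transposition exchanging `n-1` and `n`
(the unramified Galois involution). -/
def sigmaD (n : ℕ) : Fin (n + 1) → Fin (n + 1) := fun i =>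
  if (i : ℕ) = n - 1 then (↑n : Fin (n + 1))
  else if (i : ℕ) = n then (↑(n - 1) : Fin (n + 1))
  else i

/-- `tauPrimeD n` exchanges `0` with `1` and `n-1` with `n`, fixing all other vertices
(the generator of `Ξ`). -/
def tauPrimeD (n : ℕ) : Fin (n + 1) → Fin (n + 1) := fun i =>
  if (i : ℕ) = 0 then (↑(1 : ℕ) : Fin (n + 1))
  else if (i : ℕ) = 1 then (↑(0 : ℕ) : Fin (n + 1))
  else if (i : ℕ) = n - 1 then (↑n : Fin (n + 1))
  else if (i : ℕ) = n then (↑(n - 1) : Fin (n + 1))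
  else i

/-- `tauD n` is the involution with `τ(0) = n-1`, `τ(1) = n`, `τ(n-1) = 0`, `τ(n) = 1` and
`τ(i) = n - i` for `2 ≤ i ≤ n-2`. -/
def tauD (n : ℕ) : Fin (n + 1) → Fin (n + 1) := fun i =>
  if (i : ℕ) = 0 then (↑(n - 1) : Fin (n + 1))
  else if (i : ℕ) = 1 then (↑n : Fin (n + 1))
  else if (i : ℕ) = n - 1 then (↑(0 : ℕ) : Fin (n + 1))
  else if (i : ℕ) = n then (↑(1 : ℕ) : Fin (n + 1))
  else (↑(n - (i : ℕ)) : Fin (n + 1))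

/-- The extremal vertices `{0, 1, n-1, n}` of the affine Dynkin diagram of type `D_n`. -/
def extremalD (n : ℕ) : Set (Fin (n + 1)) :=
  {(↑(0 : ℕ) : Fin (n + 1)), (↑(1 : ℕ) : Fin (n + 1)), (↑(n - 1) : Fin (n + 1)),
    (↑n : Fin (n + 1))}

/-- The orbit `O(T) = {T, τ·T, τ′·T, (τ∘τ′)·T}` of a type `T` under the Klein four-group
`{id, τ, τ′, τ∘τ′}` (realizing `Ξ^nr`), acting on subsets by images. -/
def orbD (n : ℕ) (T : Set (Fin (n + 1))) : Set (Set (Fin (n + 1))) :=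
  {T, tauD n '' T, tauPrimeD n '' T, (tauD n ∘ tauPrimeD n) '' T}

/-! The vertex `n - 1` lies in `T` iff `n` does, because `σ` swaps them; so `|T ∩ E| = 2` forces
`T ∩ E` to be `{0, 1}` or `{n - 1, n}`. Writing `ρ` for the transposition of `0` and `1`, such a `T`
is `ρ`-invariant, and the identities `τ′ = σ ∘ ρ`, `σ ∘ τ = τ ∘ ρ`, `τ′ ∘ τ = τ ∘ τ′` then show that
`T` and `τ·T` are fixed by `σ` and `τ′`, which collapses the orbit to `{T, τ·T}`. Finally
`τ` exchanges `0` and `n - 1`, which lie on different sides of the dichotomy, so `τ·T ≠ T`. -/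

lemma Equiv.image_swap_eq_self {α : Type*} [DecidableEq α] {s : Set α} {a b : α}
    (h : a ∈ s ↔ b ∈ s) : Equiv.swap a b '' s = s := by
  ext x
  rw [Equiv.image_eq_preimage_symm, Equiv.symm_swap, Set.mem_preimage, Equiv.swap_apply_def]
  split_ifs with hxa hxb
  · subst hxa; exact h.symm
  · subst hxb; exact h
  · rfl

open Classical in
lemma Set.ncard_inter_insert {α : Type*} {T S : Set α} {a : α} (ha : a ∉ S) (hS : S.Finite) :
    (T ∩ insert a S).ncard = (T ∩ S).ncard + if a ∈ T then 1 else 0 := by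
  split_ifs with haT
  · rw [Set.inter_insert_of_mem haT,
      Set.ncard_insert_of_notMem (fun h => ha h.2) (hS.inter_of_right T)]
  · rw [Set.inter_insert_of_notMem haT, add_zero]

lemma mem_iff_of_ncard_inter_eq_two {α : Type*} {T : Set α} {a b c d : α}
    (hab : a ≠ b) (hac : a ≠ c) (had : a ≠ d) (hbc : b ≠ c) (hbd : b ≠ d) (hcd : c ≠ d)
    (hcdT : c ∈ T ↔ d ∈ T) (h : (T ∩ {a, b, c, d}).ncard = 2) :
    (a ∈ T ↔ b ∈ T) ∧ (a ∈ T ↔ c ∉ T) := by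
  classical
  rw [Set.ncard_inter_insert (by simp [hab, hac, had]) (Set.toFinite _),
    Set.ncard_inter_insert (by simp [hbc, hbd]) (Set.toFinite _),
    Set.ncard_inter_insert (by simpa using hcd) (Set.toFinite _), Set.singleton_def d,
    Set.ncard_inter_insert (Set.notMem_empty d) Set.finite_empty,
    Set.inter_empty, Set.ncard_empty] at h
  split_ifs at h <;> first | omega | tauto

lemma Fin.natCast_ne_natCast {m a b : ℕ} [NeZero m] (ha : a < m) (hb : b < m) (h : a ≠ b) :
    (a : Fin m) ≠ b := fun e =>
  h (by simpa only [Fin.val_cast_of_lt ha, Fin.val_cast_of_lt hb] using congrArg Fin.val e)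

section AffineD

variable {n : ℕ}

lemma val_sigmaD (i : Fin (n + 1)) :
    (sigmaD n i : ℕ) = if (i : ℕ) = n - 1 then n else if (i : ℕ) = n then n - 1 else (i : ℕ) := by
  unfold sigmaD
  split_ifs <;> simp (disch := omega) only [Fin.val_cast_of_lt]

lemma val_tauPrimeD (hn : 1 ≤ n) (i : Fin (n + 1)) :
    (tauPrimeD n i : ℕ) = if (i : ℕ) = 0 then 1 else if (i : ℕ) = 1 then 0
      else if (i : ℕ) = n - 1 then n else if (i : ℕ) = n then n - 1 else (i : ℕ) := by
  unfold tauPrimeD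
  split_ifs <;> simp (disch := omega) only [Fin.val_cast_of_lt]

lemma val_tauD (hn : 1 ≤ n) (i : Fin (n + 1)) :
    (tauD n i : ℕ) = if (i : ℕ) = 0 then n - 1 else if (i : ℕ) = 1 then n
      else if (i : ℕ) = n - 1 then 0 else if (i : ℕ) = n then 1 else n - (i : ℕ) := by
  unfold tauD
  split_ifs <;> simp (disch := omega) only [Fin.val_cast_of_lt]

lemma val_swap_zero_one (hn : 1 ≤ n) (i : Fin (n + 1)) :
    (Equiv.swap ((0 : ℕ) : Fin (n + 1)) ((1 : ℕ) : Fin (n + 1)) i : ℕ) =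
      if (i : ℕ) = 0 then 1 else if (i : ℕ) = 1 then 0 else (i : ℕ) := by
  rw [Equiv.swap_apply_def]
  simp (disch := omega) only [Fin.ext_iff, Fin.val_cast_of_lt]
  split_ifs <;> simp (disch := omega) only [Fin.val_cast_of_lt]

lemma tauPrimeD_eq_comp_swap (hn : 4 ≤ n) :
    tauPrimeD n = sigmaD n ∘ Equiv.swap ((0 : ℕ) : Fin (n + 1)) ((1 : ℕ) : Fin (n + 1)) := by
  funext i
  simp only [Fin.ext_iff, Function.comp, val_sigmaD, val_tauPrimeD (by omega : 1 ≤ n),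
    val_swap_zero_one (by omega : 1 ≤ n)]
  grind

lemma sigmaD_comp_tauD (hn : 4 ≤ n) :
    sigmaD n ∘ tauD n = tauD n ∘ Equiv.swap ((0 : ℕ) : Fin (n + 1)) ((1 : ℕ) : Fin (n + 1)) := by
  funext i
  simp only [Fin.ext_iff, Function.comp, val_sigmaD, val_tauD (by omega : 1 ≤ n),
    val_swap_zero_one (by omega : 1 ≤ n)]
  grind

lemma tauPrimeD_comp_tauD (hn : 4 ≤ n) : tauPrimeD n ∘ tauD n = tauD n ∘ tauPrimeD n := by
  funext i
  simp only [Fin.ext_iff, Function.comp, val_tauD (by omega : 1 ≤ n),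
    val_tauPrimeD (by omega : 1 ≤ n)]
  grind

lemma sigmaD_natCast_sub_one : sigmaD n ((n - 1 : ℕ) : Fin (n + 1)) = n :=
  Fin.ext (by simp (disch := omega) only [val_sigmaD, Fin.val_cast_of_lt]; grind)

lemma sigmaD_natCast_self :
    sigmaD n (n : Fin (n + 1)) = ((n - 1 : ℕ) : Fin (n + 1)) :=
  Fin.ext (by simp (disch := omega) only [val_sigmaD, Fin.val_cast_of_lt]; grind)

lemma tauD_natCast_zero : tauD n ((0 : ℕ) : Fin (n + 1)) = ((n - 1 : ℕ) : Fin (n + 1)) := by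
  simp only [tauD, Fin.val_cast_of_lt n.succ_pos, if_true]

lemma tauD_natCast_sub_one (hn : 3 ≤ n) :
    tauD n ((n - 1 : ℕ) : Fin (n + 1)) = ((0 : ℕ) : Fin (n + 1)) :=
  Fin.ext (by simp (disch := omega) only [val_tauD (by omega : 1 ≤ n), Fin.val_cast_of_lt]; grind)

lemma extremalD_mem_iff (hn : 4 ≤ n) {T : Set (Fin (n + 1))} (hσ : sigmaD n '' T = T)
    (hE : (T ∩ extremalD n).ncard = 2) :
    (((0 : ℕ) : Fin (n + 1)) ∈ T ↔ ((1 : ℕ) : Fin (n + 1)) ∈ T) ∧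
      (((0 : ℕ) : Fin (n + 1)) ∈ T ↔ ((n - 1 : ℕ) : Fin (n + 1)) ∉ T) := by
  have hσT {i : Fin (n + 1)} (hi : i ∈ T) : sigmaD n i ∈ T :=
    hσ.subset (Set.mem_image_of_mem _ hi)
  refine mem_iff_of_ncard_inter_eq_two (Fin.natCast_ne_natCast ?_ ?_ ?_)
    (Fin.natCast_ne_natCast ?_ ?_ ?_) (Fin.natCast_ne_natCast ?_ ?_ ?_)
    (Fin.natCast_ne_natCast ?_ ?_ ?_) (Fin.natCast_ne_natCast ?_ ?_ ?_)
    (Fin.natCast_ne_natCast ?_ ?_ ?_) ⟨fun h => ?_, fun h => ?_⟩ hE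
  all_goals try omega
  · simpa only [sigmaD_natCast_sub_one] using hσT h
  · simpa only [sigmaD_natCast_self] using hσT h

lemma tauD_image_ne_self (hn : 3 ≤ n) {T : Set (Fin (n + 1))}
    (hT : ((0 : ℕ) : Fin (n + 1)) ∈ T ↔ ((n - 1 : ℕ) : Fin (n + 1)) ∉ T) :
    tauD n '' T ≠ T := by
  intro h
  have hτT {i : Fin (n + 1)} (hi : i ∈ T) : tauD n i ∈ T := h.subset (Set.mem_image_of_mem _ hi)
  have h0 := tauD_natCast_zero ▸ hτT (i := ((0 : ℕ) : Fin (n + 1)))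
  have h1 := tauD_natCast_sub_one hn ▸ hτT (i := ((n - 1 : ℕ) : Fin (n + 1)))
  tauto

end AffineD

/-- Type `²D_n` (`n ≥ 4`): if `T` is a `σ`-invariant type such that `T ∩ E` has exactly two
elements (where `E` is the set of extremal vertices), then the `σ`-invariant elements of the
orbit `O(T)` are exactly `{T, τ·T}` with `τ·T ≠ T`, and both are fixed by `τ′`; so the set
of `σ`-invariant elements of `O(T)` has exactly two elements and its quotient by the action
of `τ′` also has exactly two elements. -/
theorem stmt12 (n : ℕ) (hn : 4 ≤ n) (T : Set (Fin (n + 1)))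
    (hσ : sigmaD n '' T = T)
    (hE : (T ∩ extremalD n).ncard = 2) :
    {T' ∈ orbD n T | sigmaD n '' T' = T'} = {T, tauD n '' T} ∧
    tauD n '' T ≠ T ∧
    tauPrimeD n '' T = T ∧
    tauPrimeD n '' (tauD n '' T) = tauD n '' T ∧
    {T' ∈ orbD n T | sigmaD n '' T' = T'}.ncard = 2 := by
  obtain ⟨h01, h0⟩ := extremalD_mem_iff hn hσ hE
  have hswap := Equiv.image_swap_eq_self h01
  have hτ' : tauPrimeD n '' T = T := by
    rw [tauPrimeD_eq_comp_swap hn, Set.image_comp, hswap, hσ]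
  have hστ : sigmaD n '' (tauD n '' T) = tauD n '' T := by
    rw [← Set.image_comp, sigmaD_comp_tauD hn, Set.image_comp, hswap]
  have hτ'τ : tauPrimeD n '' (tauD n '' T) = tauD n '' T := by
    rw [← Set.image_comp, tauPrimeD_comp_tauD hn, Set.image_comp, hτ']
  have hne := tauD_image_ne_self (by omega) h0
  have hfix : {T' ∈ orbD n T | sigmaD n '' T' = T'} = {T, tauD n '' T} := by
    ext U
    simp only [orbD, hτ', Set.image_comp, Set.mem_ofPred_eq, Set.mem_insert_iff,
      Set.mem_singleton_iff]
    constructor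
    · rintro ⟨hU, -⟩
      tauto
    · rintro (rfl | rfl)
      exacts [⟨Or.inl rfl, hσ⟩, ⟨Or.inr (Or.inl rfl), hστ⟩]
  exact ⟨hfix, hne, hτ', hτ'τ, by rw [hfix, Set.ncard_pair hne.symm]⟩
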